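/- arXiv:1809.02235 — 6 statements merged into one kernel-verified Lean document; each statement's English description precedes it below -/
import Mathlib

section
/- Fix α ∈ (0, e^{-1}) and an integer n ≥ 2. Let H0 ⊆ {1,…,n} be nonempty and let p_1,…,p_n be random variables with values in (0,1] such that the family {p_i}_{i∈H0} is mutually independent and each p_i with i ∈ H0 is sub-uniform. For k ∈ {0,1,…,n} set R_k = {i : p_i ≤ αk/n}, FDP(R_k) = |R_k ∩ H0| / max(|R_k|, 1), and FDP̂(R_k) = n·(max_{i∈R_k} p_i) / max(|R_k|, 1), where the maximum over the empty set is 0. Then E[ max over k ∈ {0,…,n} with FDP̂(R_k) ≤ α of FDP(R_k) ] ≤ (|H0|α/n)·( 2·log(2n/(|H0|α)) + log(8·e^5·log(8n/(|H0|α))) ). -/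
open MeasureTheory ProbabilityTheory Finset

variable {Ω : Type*}

/-- The rejection set `R_k = {i : p_i ≤ α k / n}`. -/
noncomputable def Rset (n : ℕ) (α : ℝ) (p : Fin n → Ω → ℝ) (k : ℕ) (ω : Ω) : Finset (Fin n) :=
  Finset.univ.filter (fun i => p i ω ≤ α * k / n)

/-- The false discovery proportion `FDP(R_k) = |R_k ∩ H0| / max(|R_k|, 1)`. -/
noncomputable def FDP (n : ℕ) (α : ℝ) (H0 : Finset (Fin n)) (p : Fin n → Ω → ℝ) (k : ℕ)
    (ω : Ω) : ℝ :=
  ((Rset n α p k ω ∩ H0).card : ℝ) / max ((Rset n α p k ω).card : ℝ) 1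

/-- The empirical bound `FDP̂(R_k) = n · max_{i ∈ R_k} p_i / max(|R_k|, 1)`, with the maximum
over the empty set taken to be `0`. -/
noncomputable def FDPhat (n : ℕ) (α : ℝ) (p : Fin n → Ω → ℝ) (k : ℕ) (ω : Ω) : ℝ :=
  (n : ℝ) *
    (if h : (Rset n α p k ω).Nonempty then (Rset n α p k ω).sup' h (fun i => p i ω) else 0) /
    max ((Rset n α p k ω).card : ℝ) 1

/-!
For a null `i` write `N_i = #{j ∈ H0 | p_j ≤ p_i}`. If `FDP̂(R_k) ≤ α` and `i` is the null in `R_k`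
with the largest p-value, then `|R_k ∩ H0| ≤ N_i` and `n p_i ≤ α max(|R_k|, 1)`, so
`FDP(R_k) ≤ (α / n) N_i / p_i`. Hence the quantity inside the expectation is bounded, for every
`k` at once, by `f = min(1, (α / n) max_{i ∈ H0} N_i / p_i)`.

The tail of `f` is a Benjamini–Hochberg type bound: for independent sub-uniform `X_1, …, X_m`,
`P(∃ i, X_i ≤ a N_i) ≤ m a`. Let `K_i` be the number of rejections of the step-up procedure with
thresholds `a v` once `X_i` is replaced by `0`; it is a function of the other variables, hence
independent of `X_i`, and `E[1{X_i ≤ a K_i} / K_i] ≤ a`. On the event, every `X_j` below the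
threshold of the step-up procedure has `K_j` equal to its rejection count `k`, and there are at
least `k` of them, so `∑_i 1{X_i ≤ a K_i} / K_i ≥ 1`.

Thus `P(f ≥ y) ≤ t / y` with `t = |H0| α / n`, and the layer-cake formula gives
`E f ≤ ∫₀¹ min(1, t / y) dy = t (1 - log t)`, which is below the stated bound.
-/

open scoped ENNReal

section SubUniform

variable [MeasurableSpace Ω]

def IsSubUniform (X : Ω → ℝ) (μ : Measure Ω) : Prop :=
  ∀ x ∈ Set.Icc (0 : ℝ) 1, μ {ω | X ω ≤ x} ≤ ENNReal.ofReal x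

variable {μ : Measure Ω} [IsProbabilityMeasure μ] {X : Ω → ℝ}

lemma IsSubUniform.measure_le_le (hX : IsSubUniform X μ) (x : ℝ) :
    μ {ω | X ω ≤ x} ≤ ENNReal.ofReal x := by
  rcases lt_or_ge x 0 with hx0 | hx0
  · calc μ {ω | X ω ≤ x} ≤ μ {ω | X ω ≤ 0} := measure_mono fun ω hω => hω.out.trans hx0.le
      _ ≤ ENNReal.ofReal 0 := hX 0 ⟨le_rfl, zero_le_one⟩
      _ = ENNReal.ofReal x := by rw [ENNReal.ofReal_of_nonpos hx0.le, ENNReal.ofReal_zero]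
  rcases le_or_gt x 1 with hx1 | hx1
  · exact hX x ⟨hx0, hx1⟩
  · exact prob_le_one.trans (ENNReal.one_le_ofReal.2 hx1.le)

lemma IsSubUniform.lintegral_ite_inv_le {K : Ω → ℕ} (hX : IsSubUniform X μ)
    (hXm : Measurable X) (hKm : Measurable K) (hXK : IndepFun X K μ) (a : ℝ) :
    ∫⁻ ω, (if X ω ≤ a * K ω then (K ω : ℝ≥0∞)⁻¹ else 0) ∂μ ≤ ENNReal.ofReal a := by
  set φ : ℝ × ℕ → ℝ≥0∞ := fun z => (Set.Iic (a * z.2)).indicator (fun _ => (z.2 : ℝ≥0∞)⁻¹) z.1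
  have hφ : Measurable φ := measurable_from_prod_countable_left fun k =>
    (measurable_const.indicator measurableSet_Iic :
      Measurable ((Set.Iic (a * k)).indicator fun _ => (k : ℝ≥0∞)⁻¹))
  have hsection : ∀ k : ℕ, ∫⁻ x, φ (x, k) ∂(μ.map X) ≤ ENNReal.ofReal a := fun k => by
    simp only [φ]
    rw [lintegral_indicator_const measurableSet_Iic, Measure.map_apply hXm measurableSet_Iic]
    calc (k : ℝ≥0∞)⁻¹ * μ (X ⁻¹' Set.Iic (a * k))
        ≤ (k : ℝ≥0∞)⁻¹ * (ENNReal.ofReal a * k) := by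
          gcongr
          rw [← ENNReal.ofReal_natCast, ← ENNReal.ofReal_mul' (Nat.cast_nonneg k)]
          exact hX.measure_le_le _
      _ ≤ ENNReal.ofReal a := by
          -- for `k = 0` the factor `0⁻¹ = ∞` meets `ofReal a * 0 = 0`
          rcases eq_or_ne k 0 with rfl | hk
          · simp
          · rw [mul_comm, mul_assoc, ENNReal.mul_inv_cancel (by exact_mod_cast hk)
              (ENNReal.natCast_ne_top k), mul_one]
  calc ∫⁻ ω, (if X ω ≤ a * K ω then (K ω : ℝ≥0∞)⁻¹ else 0) ∂μ
      = ∫⁻ z, φ z ∂(μ.map fun ω => (X ω, K ω)) := by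
        rw [lintegral_map hφ (hXm.prodMk hKm)]
        rfl
    _ = ∫⁻ k, ∫⁻ x, φ (x, k) ∂(μ.map X) ∂(μ.map K) := by
        rw [(indepFun_iff_map_prod_eq_prod_map_map hXm.aemeasurable hKm.aemeasurable).1 hXK,
          lintegral_prod_symm' _ hφ]
    _ ≤ ∫⁻ _, ENNReal.ofReal a ∂(μ.map K) := lintegral_mono hsection
    _ = ENNReal.ofReal a := by
        rw [lintegral_const, Measure.map_apply hKm MeasurableSet.univ, Set.preimage_univ,
          measure_univ, mul_one]

end SubUniform

lemma ProbabilityTheory.iIndepFun.indepFun_comp_update {ι E β : Type*} [MeasurableSpace Ω]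
    {μ : Measure Ω} [Fintype ι] [DecidableEq ι] [MeasurableSpace E] [MeasurableSpace β]
    {X : ι → Ω → E} (hX : iIndepFun X μ) (hXm : ∀ i, Measurable (X i)) {G : (ι → E) → β}
    (hG : Measurable G) (i : ι) (c : E) :
    IndepFun (X i) (fun ω => G (Function.update (fun j => X j ω) i c)) μ := by
  have hdisj : Disjoint ({i} : Finset ι) {i}ᶜ := disjoint_compl_right
  have hψ : Measurable fun r : ({i}ᶜ : Finset ι) → E =>
      G fun j => if h : j ∈ ({i}ᶜ : Finset ι) then r ⟨j, h⟩ else c := by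
    refine hG.comp (measurable_pi_lambda _ fun j => ?_)
    by_cases h : j ∈ ({i}ᶜ : Finset ι)
    · simpa only [dif_pos h] using measurable_pi_apply _
    · simpa only [dif_neg h] using measurable_const
  have hupdate : ∀ ω, Function.update (fun j => X j ω) i c =
      fun j => if h : j ∈ ({i}ᶜ : Finset ι) then X j ω else c := fun ω => by
    funext j
    by_cases h : j = i <;> simp [h]
  simp_rw [hupdate]
  exact (hX.indepFun_finset _ _ hdisj hXm).comp
    (measurable_pi_apply ⟨i, mem_singleton_self i⟩) hψ

lemma measurable_card_filter_le {ι : Type*} [MeasurableSpace Ω] (s : Finset ι)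
    {f : ι → Ω → ℝ} {g : Ω → ℝ} (hf : ∀ j, Measurable (f j)) (hg : Measurable g) :
    Measurable fun ω => #{j ∈ s | f j ω ≤ g ω} := by
  simp_rw [card_filter]
  exact Finset.measurable_sum _ fun j _ =>
    Measurable.ite (measurableSet_le (hf j) hg) measurable_const measurable_const

section StepUp

variable {ι : Type*} [Fintype ι]

noncomputable def stepUpCount (a : ℝ) (q : ι → ℝ) : ℕ :=
  Nat.findGreatest (fun v => v ≤ #{j | q j ≤ a * v}) (Fintype.card ι)

lemma measurable_stepUpCount (a : ℝ) : Measurable (stepUpCount (ι := ι) a) :=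
  measurable_findGreatest fun v _ =>
    measurable_card_filter_le univ measurable_pi_apply measurable_const
      (MeasurableSet.of_discrete (s := Set.Ici v))

variable [DecidableEq ι]

lemma card_filter_update_zero_le {q : ι → ℝ} {i : ι} {x : ℝ} (hx : 0 ≤ x) (hqi : q i ≤ x) :
    #{j | Function.update q i 0 j ≤ x} = #{j | q j ≤ x} := by
  congr 1
  ext j
  rcases eq_or_ne j i with rfl | hji <;> simp [*]

lemma stepUpCount_update_zero {a : ℝ} (ha : 0 ≤ a) {q : ι → ℝ} {i : ι}
    (hqi : q i ≤ a * stepUpCount a q) :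
    stepUpCount a (Function.update q i 0) = stepUpCount a q := by
  set k := stepUpCount a q
  have hcount : ∀ v : ℕ, k ≤ v →
      #{j | Function.update q i 0 j ≤ a * v} = #{j | q j ≤ a * v} := fun v hv =>
    card_filter_update_zero_le (by positivity)
      (hqi.trans (mul_le_mul_of_nonneg_left (by exact_mod_cast hv) ha))
  obtain ⟨hkm, hk, hgt⟩ := Nat.findGreatest_eq_iff.1 (rfl : stepUpCount a q = k)
  refine Nat.findGreatest_eq_iff.2 ⟨hkm, fun hk0 => ?_, fun v hkv hvm => ?_⟩
  · rw [hcount k le_rfl]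
    exact hk hk0
  · rw [hcount v hkv.le]
    exact hgt hkv hvm

lemma one_le_sum_inv_stepUpCount_update {a : ℝ} (ha : 0 ≤ a) {q : ι → ℝ}
    (h : ∃ i, q i ≤ a * #{j | q j ≤ q i}) :
    1 ≤ ∑ i, if q i ≤ a * stepUpCount a (Function.update q i 0)
      then (stepUpCount a (Function.update q i 0) : ℝ≥0∞)⁻¹ else 0 := by
  obtain ⟨i, hi⟩ := h
  set k := stepUpCount a q
  have hik : #{j | q j ≤ q i} ≤ k := by
    refine Nat.le_findGreatest (card_le_univ _) (card_le_card fun j hj => ?_)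
    simp only [mem_filter, mem_univ, true_and] at hj ⊢
    exact hj.trans hi
  have hk0 : k ≠ 0 := by
    have : 0 < #{j | q j ≤ q i} := card_pos.2 ⟨i, by simp⟩
    omega
  have hk : k ≤ #{j | q j ≤ a * k} :=
    Nat.findGreatest_spec (P := fun v => v ≤ #{j | q j ≤ a * v}) (m := 0) (Nat.zero_le _)
      (Nat.zero_le _)
  calc (1 : ℝ≥0∞) = k * (k : ℝ≥0∞)⁻¹ :=
        (ENNReal.mul_inv_cancel (by exact_mod_cast hk0) (ENNReal.natCast_ne_top k)).symm
    _ ≤ #{j | q j ≤ a * k} * (k : ℝ≥0∞)⁻¹ := by gcongr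
    _ = ∑ j with q j ≤ a * k, (k : ℝ≥0∞)⁻¹ := by rw [sum_const, nsmul_eq_mul]
    _ = ∑ j with q j ≤ a * k, if q j ≤ a * stepUpCount a (Function.update q j 0)
          then (stepUpCount a (Function.update q j 0) : ℝ≥0∞)⁻¹ else 0 := by
        refine sum_congr rfl fun j hj => ?_
        rw [mem_filter] at hj
        rw [stepUpCount_update_zero ha hj.2, if_pos hj.2]
    _ ≤ _ := sum_le_sum_of_subset (filter_subset _ _)

end StepUp

theorem measure_exists_le_mul_card_le {ι : Type*} [MeasurableSpace Ω] {μ : Measure Ω}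
    [IsProbabilityMeasure μ] [Fintype ι] {X : ι → Ω → ℝ} (hX : iIndepFun X μ)
    (hXm : ∀ i, Measurable (X i)) (hsub : ∀ i, IsSubUniform (X i) μ) {a : ℝ} (ha : 0 ≤ a) :
    μ {ω | ∃ i, X i ω ≤ a * #{j | X j ω ≤ X i ω}} ≤ ENNReal.ofReal (Fintype.card ι * a) := by
  classical
  set K : ι → Ω → ℕ := fun i ω => stepUpCount a (Function.update (fun j => X j ω) i 0)
  have hKm : ∀ i, Measurable (K i) := fun i => (measurable_stepUpCount a).comp
    (measurable_update'.comp ((measurable_pi_lambda _ hXm).prodMk measurable_const))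
  have htermm : ∀ i, Measurable fun ω => if X i ω ≤ a * K i ω then (K i ω : ℝ≥0∞)⁻¹ else 0 :=
    fun i => Measurable.ite (measurableSet_le (hXm i) (measurable_const.mul
      (measurable_from_top.comp (hKm i)))) (measurable_from_top.comp (hKm i)).inv measurable_const
  calc μ {ω | ∃ i, X i ω ≤ a * #{j | X j ω ≤ X i ω}}
      ≤ μ {ω | 1 ≤ ∑ i, if X i ω ≤ a * K i ω then (K i ω : ℝ≥0∞)⁻¹ else 0} :=
        measure_mono fun ω hω => one_le_sum_inv_stepUpCount_update ha hω
    _ ≤ ∫⁻ ω, ∑ i, (if X i ω ≤ a * K i ω then (K i ω : ℝ≥0∞)⁻¹ else 0) ∂μ := by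
        simpa using mul_meas_ge_le_lintegral₀
          (Finset.measurable_sum _ fun i _ => htermm i).aemeasurable 1
    _ = ∑ i, ∫⁻ ω, (if X i ω ≤ a * K i ω then (K i ω : ℝ≥0∞)⁻¹ else 0) ∂μ :=
        lintegral_finsetSum _ fun i _ => htermm i
    _ ≤ ∑ _i : ι, ENNReal.ofReal a := sum_le_sum fun i _ =>
        (hsub i).lintegral_ite_inv_le (hXm i) (hKm i)
          (hX.indepFun_comp_update hXm (measurable_stepUpCount a) i 0) a
    _ = ENNReal.ofReal (Fintype.card ι * a) := by
        rw [sum_const, card_univ, nsmul_eq_mul, ENNReal.ofReal_mul (Nat.cast_nonneg _),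
          ENNReal.ofReal_natCast]

lemma integrableOn_Ioc_min_one_div {t : ℝ} (ht0 : 0 ≤ t) :
    IntegrableOn (fun y : ℝ => min 1 (t / y)) (Set.Ioc 0 1) := by
  refine IntegrableOn.of_bound measure_Ioc_lt_top
    (measurable_const.min (measurable_const.div measurable_id)).aestronglyMeasurable 1
    ((ae_restrict_iff' measurableSet_Ioc).2 (ae_of_all _ fun y hy => ?_))
  rw [Real.norm_of_nonneg (le_min zero_le_one (div_nonneg ht0 hy.1.le))]
  exact min_le_left _ _

lemma integral_Ioc_min_one_div {t : ℝ} (ht0 : 0 < t) (ht1 : t ≤ 1) :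
    ∫ y in Set.Ioc 0 1, min 1 (t / y) = t * (1 - Real.log t) := by
  have hint := integrableOn_Ioc_min_one_div ht0.le
  have hsplit : Set.Ioc (0 : ℝ) 1 = Set.Ioc 0 t ∪ Set.Ioc t 1 :=
    (Set.Ioc_union_Ioc_eq_Ioc ht0.le ht1).symm
  have hlow : ∫ y in Set.Ioc 0 t, min 1 (t / y) = t := by
    rw [setIntegral_congr_fun measurableSet_Ioc (g := fun _ => (1 : ℝ)) fun y hy =>
      min_eq_left ((one_le_div hy.1).2 hy.2), setIntegral_const, Real.volume_real_Ioc_of_le ht0.le,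
      sub_zero, smul_eq_mul, mul_one]
  have hhigh : ∫ y in Set.Ioc t 1, min 1 (t / y) = -t * Real.log t := by
    rw [setIntegral_congr_fun measurableSet_Ioc (g := fun y => t * y⁻¹) fun y hy =>
      (min_eq_right ((div_le_one (ht0.trans hy.1)).2 hy.1.le)).trans (div_eq_mul_inv t y),
      ← intervalIntegral.integral_of_le ht1, intervalIntegral.integral_const_mul,
      integral_inv_of_pos ht0 one_pos, Real.log_div one_ne_zero ht0.ne', Real.log_one]
    ring
  rw [hsplit, setIntegral_union (Set.Ioc_disjoint_Ioc_of_le le_rfl) measurableSet_Ioc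
    (hint.mono_set (hsplit ▸ Set.subset_union_left))
    (hint.mono_set (hsplit ▸ Set.subset_union_right)), hlow, hhigh]
  ring

lemma integral_le_mul_one_sub_log_of_le [MeasurableSpace Ω] {μ : Measure Ω}
    [IsProbabilityMeasure μ] {f g : Ω → ℝ} (hf : Measurable f) (hf1 : ∀ ω, f ω ≤ 1)
    (hg0 : ∀ ω, 0 ≤ g ω) (hgf : ∀ ω, g ω ≤ f ω) {t : ℝ} (ht0 : 0 < t) (ht1 : t ≤ 1)
    (htail : ∀ y ∈ Set.Ioc (0 : ℝ) 1, μ {ω | y ≤ f ω} ≤ ENNReal.ofReal (t / y)) :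
    ∫ ω, g ω ∂μ ≤ t * (1 - Real.log t) := by
  have hf0 : ∀ ω, 0 ≤ f ω := fun ω => (hg0 ω).trans (hgf ω)
  have hint : Integrable f μ := Integrable.of_bound hf.aestronglyMeasurable 1
    (ae_of_all _ fun ω => by rw [Real.norm_of_nonneg (hf0 ω)]; exact hf1 ω)
  refine (integral_mono_of_nonneg (ae_of_all _ hg0) hint (ae_of_all _ hgf)).trans ?_
  rw [hint.integral_eq_integral_Ioc_meas_le (ae_of_all _ hf0) (ae_of_all _ hf1),
    ← integral_Ioc_min_one_div ht0 ht1]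
  refine integral_mono_of_nonneg (ae_of_all _ fun _ => measureReal_nonneg)
    (integrableOn_Ioc_min_one_div ht0.le)
    ((ae_restrict_iff' measurableSet_Ioc).2 (ae_of_all _ fun y hy => ?_))
  exact le_min measureReal_le_one
    (ENNReal.toReal_le_of_le_ofReal (div_nonneg ht0.le hy.1.le) (htail y hy))

lemma one_sub_log_le {t : ℝ} (ht0 : 0 < t) (ht1 : t ≤ 1) :
    1 - Real.log t ≤
      2 * Real.log (2 / t) + Real.log (8 * Real.exp 5 * Real.log (8 / t)) := by
  have hlogt : Real.log t ≤ 0 := Real.log_nonpos ht0.le ht1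
  have hlog2 := Real.log_two_gt_d9
  have hlog8 : 2 ≤ Real.log (8 / t) := by
    calc (2 : ℝ) ≤ 3 * Real.log 2 := by linarith
      _ = Real.log 8 := by rw [show (8 : ℝ) = 2 ^ 3 by norm_num, Real.log_pow]; norm_num
      _ ≤ Real.log (8 / t) := Real.log_le_log (by norm_num) ((le_div_iff₀ ht0).2 (by linarith))
  have hlast : 0 ≤ Real.log (8 * Real.exp 5 * Real.log (8 / t)) := by
    refine Real.log_nonneg ?_
    have := Real.add_one_le_exp 5
    nlinarith
  rw [Real.log_div two_ne_zero ht0.ne']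
  linarith

section NullScore

variable {ι : Type*}

noncomputable def nullScore (H : Finset ι) (hH : H.Nonempty) (q : ι → ℝ) : ℝ :=
  H.sup' hH fun i => #{j ∈ H | q j ≤ q i} / q i

lemma div_le_nullScore {H : Finset ι} (hH : H.Nonempty) (q : ι → ℝ) {i : ι} (hi : i ∈ H) :
    #{j ∈ H | q j ≤ q i} / q i ≤ nullScore H hH q :=
  le_sup' (fun i => (#{j ∈ H | q j ≤ q i} : ℝ) / q i) hi

lemma nullScore_nonneg {H : Finset ι} (hH : H.Nonempty) {q : ι → ℝ} (hq : ∀ i ∈ H, 0 < q i) :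
    0 ≤ nullScore H hH q := by
  obtain ⟨i, hi⟩ := hH
  exact (div_nonneg (Nat.cast_nonneg _) (hq i hi).le).trans (div_le_nullScore _ q hi)

lemma exists_card_inter_div_le [DecidableEq ι] {R H : Finset ι} {q : ι → ℝ}
    (hq : ∀ i ∈ H, 0 < q i) {c α : ℝ} (hc : 0 < c)
    (hR : ∀ i ∈ R, c * q i ≤ α * max (#R : ℝ) 1) (hRH : (R ∩ H).Nonempty) :
    ∃ i ∈ H, (#(R ∩ H) : ℝ) / max (#R : ℝ) 1 ≤ α / c * (#{j ∈ H | q j ≤ q i} / q i) := by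
  obtain ⟨i, hi, hmax⟩ := exists_max_image (R ∩ H) q hRH
  rw [mem_inter] at hi
  have hqi := hq i hi.2
  have hM : (0 : ℝ) < max (#R : ℝ) 1 := lt_max_of_lt_right one_pos
  have hcard : (#(R ∩ H) : ℝ) ≤ #{j ∈ H | q j ≤ q i} := by
    exact_mod_cast card_le_card fun j hj => mem_filter.2 ⟨(mem_inter.1 hj).2, hmax j hj⟩
  refine ⟨i, hi.2, ?_⟩
  calc (#(R ∩ H) : ℝ) / max (#R : ℝ) 1 ≤ #{j ∈ H | q j ≤ q i} / max (#R : ℝ) 1 := by gcongr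
    _ = #{j ∈ H | q j ≤ q i} * (1 / max (#R : ℝ) 1) := by ring
    _ ≤ #{j ∈ H | q j ≤ q i} * (α / (c * q i)) := by
      refine mul_le_mul_of_nonneg_left ?_ (Nat.cast_nonneg _)
      rw [div_le_div_iff₀ hM (by positivity), one_mul]
      exact hR i hi.1
    _ = α / c * (#{j ∈ H | q j ≤ q i} / q i) := by ring

lemma exists_le_mul_card_of_le_mul_nullScore {H : Finset ι} (hH : H.Nonempty) {q : ι → ℝ}
    (hq : ∀ i ∈ H, 0 < q i) {c y : ℝ} (hy : 0 < y) (hyc : y ≤ c * nullScore H hH q) :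
    ∃ i ∈ H, q i ≤ c / y * #{j ∈ H | q j ≤ q i} := by
  obtain ⟨i, hi, hsup⟩ := exists_mem_eq_sup' hH fun i => (#{j ∈ H | q j ≤ q i} : ℝ) / q i
  refine ⟨i, hi, ?_⟩
  rw [nullScore, hsup, mul_div_assoc', le_div_iff₀ (hq i hi)] at hyc
  rw [div_mul_eq_mul_div, le_div_iff₀ hy]
  linarith

lemma card_univ_filter_subtype (H : Finset ι) (P : ι → Prop) [DecidablePred P] :
    #{j : H | P j} = #{j ∈ H | P j} := by
  rw [univ_eq_attach, filter_attach, card_map, card_attach]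

variable [MeasurableSpace Ω]

lemma measurable_nullScore {H : Finset ι} (hH : H.Nonempty) {X : ι → Ω → ℝ}
    (hX : ∀ i, Measurable (X i)) : Measurable fun ω => nullScore H hH fun i => X i ω := by
  convert measurable_sup' hH fun i _ =>
    ((measurable_from_top (f := (Nat.cast : ℕ → ℝ))).comp
      (measurable_card_filter_le H hX (hX i))).div (hX i) using 1
  funext ω
  simp only [nullScore, Finset.sup'_apply]
  rfl

lemma measure_le_mul_nullScore_le {μ : Measure Ω} [IsProbabilityMeasure μ] {H : Finset ι}
    (hH : H.Nonempty) {X : ι → Ω → ℝ} (hX : iIndepFun (fun i : H => X i) μ)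
    (hXm : ∀ i, Measurable (X i)) (hsub : ∀ i ∈ H, IsSubUniform (X i) μ)
    (hpos : ∀ ω, ∀ i ∈ H, 0 < X i ω) {c y : ℝ} (hc : 0 ≤ c) (hy : 0 < y) :
    μ {ω | y ≤ c * nullScore H hH fun i => X i ω} ≤ ENNReal.ofReal (#H * c / y) := by
  calc μ {ω | y ≤ c * nullScore H hH fun i => X i ω}
      ≤ μ {ω | ∃ i : H, X i ω ≤ c / y * #{j : H | X j ω ≤ X i ω}} := by
        refine measure_mono fun ω hω => ?_
        obtain ⟨i, hi, hle⟩ := exists_le_mul_card_of_le_mul_nullScore hH (hpos ω) hy hω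
        exact ⟨⟨i, hi⟩, by rwa [card_univ_filter_subtype H fun j => X j ω ≤ X i ω]⟩
    _ ≤ ENNReal.ofReal (Fintype.card H * (c / y)) :=
        measure_exists_le_mul_card_le hX (fun i => hXm i) (fun i => hsub i i.2)
          (div_nonneg hc hy.le)
    _ = ENNReal.ofReal (#H * c / y) := by rw [Fintype.card_coe, mul_div_assoc]

end NullScore

section FDR

variable {n : ℕ} {α : ℝ} {p : Fin n → Ω → ℝ} {k : ℕ} {ω : Ω}

lemma mul_le_of_FDPhat_le (h : FDPhat n α p k ω ≤ α) :
    ∀ i ∈ Rset n α p k ω, n * p i ω ≤ α * max (#(Rset n α p k ω) : ℝ) 1 := fun i hi => by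
  have hR : (Rset n α p k ω).Nonempty := ⟨i, hi⟩
  rw [FDPhat, dif_pos hR, div_le_iff₀ (lt_max_of_lt_right one_pos)] at h
  exact (mul_le_mul_of_nonneg_left (le_sup' (fun i => p i ω) hi) (Nat.cast_nonneg n)).trans h

lemma FDP_nonneg (H0 : Finset (Fin n)) : 0 ≤ FDP n α H0 p k ω :=
  div_nonneg (Nat.cast_nonneg _) (le_max_of_le_right zero_le_one)

lemma FDP_le_one (H0 : Finset (Fin n)) : FDP n α H0 p k ω ≤ 1 := by
  refine div_le_one_of_le₀ ?_ (le_max_of_le_right zero_le_one)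
  exact le_max_of_le_left (by exact_mod_cast card_le_card inter_subset_left)

lemma FDP_le_mul_nullScore (hn : 0 < n) (hα : 0 ≤ α) {H0 : Finset (Fin n)} (hH0 : H0.Nonempty)
    (hp : ∀ i ∈ H0, 0 < p i ω) (h : FDPhat n α p k ω ≤ α) :
    FDP n α H0 p k ω ≤ α / n * nullScore H0 hH0 fun i => p i ω := by
  rcases (Rset n α p k ω ∩ H0).eq_empty_or_nonempty with hRH | hRH
  · rw [FDP, hRH, card_empty, Nat.cast_zero, zero_div]
    exact mul_nonneg (by positivity) (nullScore_nonneg hH0 hp)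
  obtain ⟨i, hi, hle⟩ :=
    exists_card_inter_div_le hp (by exact_mod_cast hn) (mul_le_of_FDPhat_le h) hRH
  exact hle.trans (mul_le_mul_of_nonneg_left (div_le_nullScore hH0 _ hi) (by positivity))

lemma sup'_FDP_nonneg (H0 : Finset (Fin n)) :
    0 ≤ (range (n + 1)).sup' nonempty_range_add_one
      fun k => if FDPhat n α p k ω ≤ α then FDP n α H0 p k ω else 0 := by
  refine le_sup'_of_le _ (mem_range.2 n.succ_pos) ?_
  split_ifs
  exacts [FDP_nonneg H0, le_rfl]

lemma sup'_FDP_le_min (hn : 0 < n) (hα : 0 ≤ α) {H0 : Finset (Fin n)} (hH0 : H0.Nonempty)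
    (hp : ∀ i ∈ H0, 0 < p i ω) :
    (range (n + 1)).sup' nonempty_range_add_one
        (fun k => if FDPhat n α p k ω ≤ α then FDP n α H0 p k ω else 0) ≤
      min 1 (α / n * nullScore H0 hH0 fun i => p i ω) := by
  refine sup'_le _ _ fun k _ => ?_
  split_ifs with h
  · exact le_min (FDP_le_one H0) (FDP_le_mul_nullScore hn hα hH0 hp h)
  · exact le_min zero_le_one (mul_nonneg (by positivity) (nullScore_nonneg hH0 hp))

end FDR

/-- Theorem 1 (anytime FDR control for BH-type selections), sharp form. -/
theorem expected_max_FDP_le [MeasureSpace Ω] [IsProbabilityMeasure (ℙ : Measure Ω)]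
    {n : ℕ} {α : ℝ} (hα0 : 0 < α) (hα1 : α < Real.exp (-1))
    (H0 : Finset (Fin n)) (hH0 : H0.Nonempty)
    (p : Fin n → Ω → ℝ) (hmeas : ∀ i, Measurable (p i))
    (hrange : ∀ i ω, p i ω ∈ Set.Ioc (0 : ℝ) 1)
    (hsubunif : ∀ i ∈ H0, ∀ x ∈ Set.Icc (0 : ℝ) 1,
      ℙ {ω | p i ω ≤ x} ≤ ENNReal.ofReal x)
    (hindep : iIndepFun
      (fun i : {i // i ∈ H0} => p i.1) ℙ) :
    ∫ ω, (Finset.range (n + 1)).sup' ⟨0, by simp⟩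
        (fun k => if FDPhat n α p k ω ≤ α then FDP n α H0 p k ω else 0) ∂ℙ
      ≤ ((H0.card : ℝ) * α / n) *
        (2 * Real.log (2 * n / (H0.card * α)) +
          Real.log (8 * Real.exp 5 * Real.log (8 * n / (H0.card * α)))) := by
  have hn : 0 < n := Fin.pos_iff_nonempty.2 ⟨hH0.choose⟩
  have hp : ∀ ω, ∀ i ∈ H0, 0 < p i ω := fun ω i _ => (hrange i ω).1
  set t := (#H0 : ℝ) * α / n with ht
  have ht0 : 0 < t := by positivity
  have ht1 : t ≤ 1 := by
    have hH0n : (#H0 : ℝ) ≤ n := by exact_mod_cast (card_le_univ H0).trans_eq (Fintype.card_fin n)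
    have hα1' : α ≤ 1 := hα1.le.trans (Real.exp_lt_one_iff.2 (by norm_num)).le
    rw [ht, div_le_one (by positivity)]
    nlinarith
  have htail : ∀ y ∈ Set.Ioc (0 : ℝ) 1,
      ℙ {ω | y ≤ min 1 (α / n * nullScore H0 hH0 fun i => p i ω)} ≤ ENNReal.ofReal (t / y) :=
    fun y hy => (measure_mono fun ω hω => hω.out.trans (min_le_right _ _)).trans
      ((measure_le_mul_nullScore_le hH0 hindep hmeas hsubunif hp (by positivity) hy.1).trans_eq
        (by rw [ht]; congr 1; ring))
  calc _ ≤ t * (1 - Real.log t) := integral_le_mul_one_sub_log_of_le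
          (measurable_const.min (measurable_const.mul (measurable_nullScore hH0 hmeas)))
          (fun ω => min_le_left _ _) (fun ω => sup'_FDP_nonneg H0)
          (fun ω => sup'_FDP_le_min hn hα0.le hH0 (hp ω)) ht0 ht1 htail
    _ ≤ _ := by
        rw [show 2 * (n : ℝ) / (#H0 * α) = 2 / t by rw [ht]; field_simp,
          show 8 * (n : ℝ) / (#H0 * α) = 8 / t by rw [ht]; field_simp]
        exact mul_le_mul_of_nonneg_left (one_sub_log_le ht0 ht1) ht0.le
end

section
/- Fix a vector a ∈ ℝ_+^n with strictly positive entries and δ ∈ (0, e^{-1}], and let Z_1,…,Z_n be independent real-valued random variables satisfying P(Z_i ≥ t) ≤ exp(−t/a_i) for all t ≥ 0. Then with probability at least 1 − δ: Σ_{i=1}^n Z_i ≤ 5·log(1/δ)·Σ_{i=1}^n a_i. -/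
/-!
Chernoff's method with parameter `l = (2 ∑ aᵢ)⁻¹`. By the layer-cake formula the tail bound gives
`E exp (l Zᵢ) ≤ 1 + ∫_{t > 1} t ^ (-(l aᵢ)⁻¹) dt = (1 - l aᵢ)⁻¹ ≤ exp (2 l aᵢ)`, since `l aᵢ ≤ 1/2`.
By independence `E exp (l ∑ Zᵢ) ≤ e`, so Markov's inequality bounds `P (∑ Zᵢ ≥ 5 L ∑ aᵢ)` by
`exp (1 - 5 L / 2) ≤ exp (-L) = δ`, where `L = log (1/δ) ≥ 1`.
-/

open MeasureTheory ProbabilityTheory Finset Set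

section ExponentialTail

variable {Ω : Type*} [MeasurableSpace Ω] {μ : Measure Ω} {X : Ω → ℝ} {a l : ℝ}

lemma measure_lt_exp_mul_le_rpow_of_tail (ha : 0 < a) (hl : 0 < l)
    (htail : ∀ t, 0 ≤ t → μ {ω | X ω ≥ t} ≤ ENNReal.ofReal (Real.exp (-t / a)))
    {t : ℝ} (ht : 1 ≤ t) :
    μ {ω | t < Real.exp (l * X ω)} ≤ ENNReal.ofReal (t ^ (-(l * a)⁻¹)) := by
  have ht0 : 0 < t := zero_lt_one.trans_le ht
  have hsub : {ω | t < Real.exp (l * X ω)} ⊆ {ω | X ω ≥ Real.log t / l} := fun ω hω => by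
    rw [mem_ofPred_eq, ← Real.log_lt_iff_lt_exp ht0] at hω
    exact (div_le_iff₀ hl).mpr (by linarith)
  have hexp : Real.exp (-(Real.log t / l) / a) = t ^ (-(l * a)⁻¹) := by
    rw [Real.rpow_def_of_pos ht0]
    congr 1
    field_simp
  calc μ {ω | t < Real.exp (l * X ω)} ≤ μ {ω | X ω ≥ Real.log t / l} := measure_mono hsub
    _ ≤ _ := htail _ (div_nonneg (Real.log_nonneg ht) hl.le)
    _ = _ := by rw [hexp]

lemma lintegral_Ioi_one_rpow_neg {c : ℝ} (hc : 1 < c) :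
    ∫⁻ t in Ioi (1 : ℝ), ENNReal.ofReal (t ^ (-c)) = ENNReal.ofReal (c - 1)⁻¹ := by
  rw [← ofReal_integral_eq_lintegral_ofReal (integrableOn_Ioi_rpow_of_lt (by linarith) one_pos)
    ((ae_restrict_iff' measurableSet_Ioi).mpr (Filter.Eventually.of_forall
      fun t ht => Real.rpow_nonneg (zero_le_one.trans (le_of_lt ht)) _)),
    integral_Ioi_rpow_of_lt (by linarith) one_pos, Real.one_rpow,
    neg_div, ← div_neg, neg_add, neg_neg, one_div, ← sub_eq_add_neg]

variable [IsProbabilityMeasure μ]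

/-- `(1 - l * a)⁻¹` is the moment generating function at `l` of the exponential distribution with
mean `a`. -/
lemma lintegral_exp_mul_le_of_tail (hX : AEMeasurable X μ) (ha : 0 < a) (hl : 0 < l)
    (hla : l * a < 1)
    (htail : ∀ t, 0 ≤ t → μ {ω | X ω ≥ t} ≤ ENNReal.ofReal (Real.exp (-t / a))) :
    ∫⁻ ω, ENNReal.ofReal (Real.exp (l * X ω)) ∂μ ≤ ENNReal.ofReal (1 - l * a)⁻¹ := by
  have hla0 : 0 < l * a := mul_pos hl ha
  rw [lintegral_eq_lintegral_meas_lt μ (Filter.Eventually.of_forall fun ω => (Real.exp_pos _).le)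
      (hX.const_mul l).exp, ← Ioc_union_Ioi_eq_Ioi zero_le_one,
    lintegral_union measurableSet_Ioi Ioc_disjoint_Ioi_same]
  have hsmall : ∫⁻ t in Ioc (0 : ℝ) 1, μ {ω | t < Real.exp (l * X ω)} ≤ 1 :=
    calc ∫⁻ t in Ioc (0 : ℝ) 1, μ {ω | t < Real.exp (l * X ω)}
        ≤ ∫⁻ _ in Ioc (0 : ℝ) 1, 1 := lintegral_mono fun _ => prob_le_one
      _ = 1 := by simp
  have hlarge : ∫⁻ t in Ioi (1 : ℝ), μ {ω | t < Real.exp (l * X ω)}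
      ≤ ENNReal.ofReal ((l * a)⁻¹ - 1)⁻¹ :=
    calc ∫⁻ t in Ioi (1 : ℝ), μ {ω | t < Real.exp (l * X ω)}
        ≤ ∫⁻ t in Ioi (1 : ℝ), ENNReal.ofReal (t ^ (-(l * a)⁻¹)) :=
          setLIntegral_mono' measurableSet_Ioi fun t ht =>
            measure_lt_exp_mul_le_rpow_of_tail ha hl htail (le_of_lt ht)
      _ = _ := lintegral_Ioi_one_rpow_neg ((one_lt_inv₀ hla0).mpr hla)
  have hsum : 1 + ((l * a)⁻¹ - 1)⁻¹ = (1 - l * a)⁻¹ := by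
    field_simp [(sub_pos.mpr hla).ne']
    ring
  calc _ ≤ 1 + ENNReal.ofReal ((l * a)⁻¹ - 1)⁻¹ := add_le_add hsmall hlarge
    _ = _ := by
      rw [← ENNReal.ofReal_one, ← ENNReal.ofReal_add zero_le_one
        (inv_nonneg.mpr (sub_nonneg.mpr ((one_le_inv₀ hla0).mpr hla.le))), hsum]

lemma integrable_exp_mul_of_tail (hX : AEMeasurable X μ) (ha : 0 < a) (hl : 0 < l)
    (hla : l * a < 1)
    (htail : ∀ t, 0 ≤ t → μ {ω | X ω ≥ t} ≤ ENNReal.ofReal (Real.exp (-t / a))) :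
    Integrable (fun ω => Real.exp (l * X ω)) μ := by
  refine ⟨(hX.const_mul l).exp.aestronglyMeasurable, ?_⟩
  rw [hasFiniteIntegral_iff_ofReal (Filter.Eventually.of_forall fun ω => (Real.exp_pos _).le)]
  exact (lintegral_exp_mul_le_of_tail hX ha hl hla htail).trans_lt ENNReal.ofReal_lt_top

lemma mgf_le_of_tail (hX : AEMeasurable X μ) (ha : 0 < a) (hl : 0 < l) (hla : l * a < 1)
    (htail : ∀ t, 0 ≤ t → μ {ω | X ω ≥ t} ≤ ENNReal.ofReal (Real.exp (-t / a))) :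
    mgf X μ l ≤ (1 - l * a)⁻¹ := by
  rw [mgf, integral_eq_lintegral_of_nonneg_ae
    (Filter.Eventually.of_forall fun ω => (Real.exp_pos _).le)
    (hX.const_mul l).exp.aestronglyMeasurable]
  exact ENNReal.toReal_le_of_le_ofReal (inv_nonneg.mpr (by linarith))
    (lintegral_exp_mul_le_of_tail hX ha hl hla htail)

end ExponentialTail

lemma inv_one_sub_le_exp_two_mul {x : ℝ} (hx0 : 0 ≤ x) (hx : x ≤ 1 / 2) :
    (1 - x)⁻¹ ≤ Real.exp (2 * x) :=
  calc (1 - x)⁻¹ ≤ 1 + 2 * x := by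
        rw [inv_le_iff_one_le_mul₀ (by linarith)]
        nlinarith
    _ ≤ Real.exp (2 * x) := by linarith [Real.add_one_le_exp (2 * x)]

section IndependentSum

variable {Ω ι : Type*} [MeasurableSpace Ω] {μ : Measure Ω} [Fintype ι] {Z : ι → Ω → ℝ}
  {a : ι → ℝ} {l : ℝ}

lemma ProbabilityTheory.iIndepFun.mgf_sum_le_of_tail (hmeas : ∀ i, Measurable (Z i))
    (hindep : iIndepFun Z μ) (ha : ∀ i, 0 < a i) (hl : 0 < l) (hla : ∀ i, l * a i ≤ 1 / 2)
    (htail : ∀ i, ∀ t, 0 ≤ t → μ {ω | Z i ω ≥ t} ≤ ENNReal.ofReal (Real.exp (-t / a i))) :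
    mgf (∑ i, Z i) μ l ≤ Real.exp (2 * l * ∑ i, a i) := by
  have := hindep.isProbabilityMeasure
  rw [hindep.mgf_sum hmeas, mul_sum, Real.exp_sum]
  refine prod_le_prod (fun i _ => mgf_nonneg) fun i _ => ?_
  calc mgf (Z i) μ l
      ≤ (1 - l * a i)⁻¹ :=
        mgf_le_of_tail (hmeas i).aemeasurable (ha i) hl (by linarith [hla i]) (htail i)
    _ ≤ Real.exp (2 * (l * a i)) :=
        inv_one_sub_le_exp_two_mul (mul_pos hl (ha i)).le (hla i)
    _ = Real.exp (2 * l * a i) := by rw [mul_assoc]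

lemma ProbabilityTheory.iIndepFun.measure_sum_ge_le_of_tail (hmeas : ∀ i, Measurable (Z i))
    (hindep : iIndepFun Z μ) (ha : ∀ i, 0 < a i) (hl : 0 < l) (hla : ∀ i, l * a i ≤ 1 / 2)
    (htail : ∀ i, ∀ t, 0 ≤ t → μ {ω | Z i ω ≥ t} ≤ ENNReal.ofReal (Real.exp (-t / a i)))
    (ε : ℝ) :
    μ.real {ω | ε ≤ ∑ i, Z i ω} ≤ Real.exp (-l * ε + 2 * l * ∑ i, a i) := by
  have := hindep.isProbabilityMeasure
  have hint : Integrable (fun ω => Real.exp (l * (∑ i, Z i) ω)) μ :=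
    hindep.integrable_exp_mul_sum hmeas fun i _ =>
      integrable_exp_mul_of_tail (hmeas i).aemeasurable (ha i) hl (by linarith [hla i]) (htail i)
  calc μ.real {ω | ε ≤ ∑ i, Z i ω}
      = μ.real {ω | ε ≤ (∑ i, Z i) ω} := by simp only [Finset.sum_apply]
    _ ≤ Real.exp (-l * ε) * mgf (∑ i, Z i) μ l := measure_ge_le_exp_mul_mgf ε hl.le hint
    _ ≤ Real.exp (-l * ε) * Real.exp (2 * l * ∑ i, a i) :=
        mul_le_mul_of_nonneg_left (hindep.mgf_sum_le_of_tail hmeas ha hl hla htail)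
          (Real.exp_nonneg _)
    _ = _ := (Real.exp_add _ _).symm

end IndependentSum

lemma one_sub_ofReal_le_prob_of_compl_subset {Ω : Type*} [MeasurableSpace Ω] {μ : Measure Ω}
    [IsProbabilityMeasure μ] {s t : Set Ω} {δ : ℝ} (hst : sᶜ ⊆ t) (ht : μ.real t ≤ δ) :
    1 - ENNReal.ofReal δ ≤ μ s := by
  have ht' : μ t ≤ ENNReal.ofReal δ := (ENNReal.le_ofReal_iff_toReal_le (measure_ne_top _ _)
    ((measureReal_nonneg).trans ht)).mpr ht
  rw [tsub_le_iff_right, ← measure_univ (μ := μ)]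
  calc μ univ ≤ μ s + μ sᶜ := measure_univ_le_add_compl s
    _ ≤ μ s + ENNReal.ofReal δ := add_le_add_right ((measure_mono hst).trans ht') _

/-- Lemma 9 (high-probability bound on a sum of independent random variables with
exponential tails). -/
theorem exponential_tails_sum_high_prob {Ω : Type*} [MeasureSpace Ω]
    [IsProbabilityMeasure (ℙ : Measure Ω)]
    {n : ℕ} (hn : 0 < n) (a : Fin n → ℝ) (ha : ∀ i, 0 < a i)
    {δ : ℝ} (hδ0 : 0 < δ) (hδ1 : δ ≤ Real.exp (-1))
    (Z : Fin n → Ω → ℝ) (hmeas : ∀ i, Measurable (Z i))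
    (hindep : iIndepFun Z ℙ)
    (htail : ∀ i, ∀ t : ℝ, 0 ≤ t → ℙ {ω | Z i ω ≥ t} ≤ ENNReal.ofReal (Real.exp (-t / a i))) :
    1 - ENNReal.ofReal δ ≤
      ℙ {ω | ∑ i, Z i ω ≤ 5 * Real.log (1 / δ) * ∑ i, a i} := by
  have hlog : Real.log (1 / δ) = -Real.log δ := by rw [one_div, Real.log_inv]
  have hL : 1 ≤ Real.log (1 / δ) := by
    rw [hlog, le_neg, ← Real.log_exp (-1)]
    exact Real.log_le_log hδ0 hδ1
  set S := ∑ i, a i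
  set L := Real.log (1 / δ)
  have hS : 0 < S := sum_pos (fun i _ => ha i) ⟨⟨0, hn⟩, mem_univ _⟩
  have hla : ∀ i, (2 * S)⁻¹ * a i ≤ 1 / 2 := fun i => by
    rw [inv_mul_le_iff₀ (by positivity)]
    linarith [(single_le_sum (fun j _ => (ha j).le) (mem_univ i) : a i ≤ S)]
  refine one_sub_ofReal_le_prob_of_compl_subset (t := {ω | 5 * L * S ≤ ∑ i, Z i ω})
    (fun _ hω => le_of_not_ge (notMem_ofPred_iff.mp hω))
    ((hindep.measure_sum_ge_le_of_tail hmeas ha (by positivity) hla htail _).trans ?_)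
  calc Real.exp (-(2 * S)⁻¹ * (5 * L * S) + 2 * (2 * S)⁻¹ * S)
      = Real.exp (1 - 5 / 2 * L) := by congr 1; field_simp; ring
    _ ≤ Real.exp (Real.log δ) := Real.exp_le_exp.mpr (by linarith)
    _ = δ := Real.exp_log hδ0
end

section
/- Fix δ ∈ (0, 1/4) and set β = (5/(3(1−4δ)))·log(1/δ). Let ρ_1,…,ρ_m be mutually independent sub-uniform random variables with values in (0,1]. Then with probability at least 1 − δ, the number of indices i with ρ_i ≥ δ/β is at least m/2. -/
/-!
If fewer than `m / 2` of the `ρ i` reach `t = δ / β`, then some `m / 2 + 1` of them lie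
below `t`. By independence and sub-uniformity, the variables of a fixed set of `m / 2 + 1`
indices all lie below `t` with probability at most `t ^ (m / 2 + 1)`, so a union bound over at most `2 ^ m` such sets gives
`2 ^ m * t ^ (m / 2 + 1) ≤ 2 * t * (4 * t) ^ (m / 2) ≤ δ`, because `β ≥ 2`.
-/

open MeasureTheory ProbabilityTheory Finset

lemma setOf_le_card_filter_subset_biUnion_powersetCard {Ω ι : Type*} [Fintype ι]
    (P : ι → Ω → Prop) [∀ i ω, Decidable (P i ω)] (k : ℕ) :
    {ω | k ≤ #{i | P i ω}} ⊆
      ⋃ S ∈ powersetCard k (univ : Finset ι), ⋂ i ∈ S, {ω | P i ω} := by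
  intro ω hω
  obtain ⟨S, hS, hcard⟩ := exists_subset_card_eq hω
  simp only [Set.mem_iUnion, Set.mem_iInter, mem_powersetCard]
  exact ⟨S, ⟨subset_univ S, hcard⟩, fun i hi => (mem_filter.mp (hS hi)).2⟩

lemma measure_le_card_filter_mem_le_choose_mul_pow {Ω ι β : Type*} [MeasurableSpace Ω]
    [MeasurableSpace β] [Fintype ι] {μ : Measure Ω} {X : ι → Ω → β} (hX : iIndepFun X μ)
    {B : Set β} (hB : MeasurableSet B) [DecidablePred (· ∈ B)] {p : ENNReal}
    (hp : ∀ i, μ (X i ⁻¹' B) ≤ p) (k : ℕ) :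
    μ {ω | k ≤ #{i | X i ω ∈ B}} ≤ (Fintype.card ι).choose k * p ^ k := by
  calc μ {ω | k ≤ #{i | X i ω ∈ B}}
      ≤ μ (⋃ S ∈ powersetCard k (univ : Finset ι), ⋂ i ∈ S, X i ⁻¹' B) :=
        measure_mono (setOf_le_card_filter_subset_biUnion_powersetCard (X · · ∈ B) k)
    _ ≤ ∑ S ∈ powersetCard k (univ : Finset ι), μ (⋂ i ∈ S, X i ⁻¹' B) :=
        measure_biUnion_finset_le _ _
    _ ≤ ∑ S ∈ powersetCard k (univ : Finset ι), p ^ k := by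
        refine sum_le_sum fun S hS => ?_
        rw [hX.meas_biInter fun i _ => ⟨B, hB, rfl⟩, ← (mem_powersetCard.mp hS).2]
        exact prod_le_pow_card _ _ _ fun i _ => hp i
    _ = (Fintype.card ι).choose k * p ^ k := by
        rw [sum_const, card_powersetCard, card_univ, nsmul_eq_mul]

lemma half_succ_le_card_filter_not {ι : Type*} [Fintype ι] (P : ι → Prop) [DecidablePred P]
    (h : (#{i | P i} : ℝ) < Fintype.card ι / 2) :
    Fintype.card ι / 2 + 1 ≤ #{i | ¬P i} := by
  have h2 : 2 * #{i | P i} < Fintype.card ι := by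
    exact_mod_cast (by linarith : (2 * #{i | P i} : ℝ) < Fintype.card ι)
  have hsplit := card_filter_add_card_filter_not (s := univ) (fun i => P i)
  rw [card_univ] at hsplit
  omega

lemma choose_mul_pow_half_succ_le {t : ℝ} (ht0 : 0 ≤ t) (ht : 4 * t ≤ 1) (m : ℕ) :
    (m.choose (m / 2 + 1) : ℝ) * t ^ (m / 2 + 1) ≤ 2 * t := by
  calc (m.choose (m / 2 + 1) : ℝ) * t ^ (m / 2 + 1)
      ≤ 2 ^ (2 * (m / 2) + 1) * t ^ (m / 2 + 1) := by
        gcongr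
        exact_mod_cast (Nat.choose_le_two_pow _ _).trans (Nat.pow_le_pow_right two_pos (by omega))
    _ = 2 * t * (4 * t) ^ (m / 2) := by
        have h4 : (2 : ℝ) ^ (2 * (m / 2)) = 4 ^ (m / 2) := by rw [pow_mul]; norm_num
        rw [pow_succ, h4, pow_succ, mul_pow]; ring
    _ ≤ 2 * t * 1 := by gcongr; exact pow_le_one₀ (by positivity) ht
    _ = 2 * t := mul_one _

lemma two_le_five_div_mul_log_one_div {δ : ℝ} (hδ0 : 0 < δ) (hδ1 : δ < 1 / 4) :
    2 ≤ 5 / (3 * (1 - 4 * δ)) * Real.log (1 / δ) := by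
  have hlog : 6 / 5 ≤ Real.log (1 / δ) := by
    have hlog4 : Real.log 4 ≤ Real.log (1 / δ) :=
      Real.log_le_log (by norm_num) (by rw [le_div_iff₀ hδ0]; linarith)
    have hlog4_eq : Real.log 4 = 2 * Real.log 2 := by
      rw [show (4 : ℝ) = 2 ^ 2 by norm_num, Real.log_pow, Nat.cast_ofNat]
    linarith [Real.log_two_gt_d9]
  have hfrac : 5 / 3 ≤ 5 / (3 * (1 - 4 * δ)) :=
    div_le_div_of_nonneg_left (by norm_num) (by linarith) (by linarith)
  nlinarith

theorem half_subuniform_above_threshold_general {Ω : Type*} [MeasureSpace Ω]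
    [IsProbabilityMeasure (ℙ : Measure Ω)]
    {δ : ℝ} (hδ0 : 0 < δ) (hδ1 : δ < 1 / 4)
    {m : ℕ} (ρ : Fin m → Ω → ℝ)
    (hsubunif : ∀ i, ∀ x ∈ Set.Icc (0 : ℝ) 1, ℙ {ω | ρ i ω ≤ x} ≤ ENNReal.ofReal x)
    (hindep : iIndepFun ρ ℙ) :
    1 - ENNReal.ofReal δ ≤
      ℙ {ω | (m : ℝ) / 2 ≤
        ((Finset.univ.filter
          (fun i => δ / (5 / (3 * (1 - 4 * δ)) * Real.log (1 / δ)) ≤ ρ i ω)).card : ℝ)} := by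
  set t := δ / (5 / (3 * (1 - 4 * δ)) * Real.log (1 / δ))
  have hβ := two_le_five_div_mul_log_one_div hδ0 hδ1
  have ht0 : 0 < t := div_pos hδ0 (by linarith)
  have ht : t ≤ δ / 2 := div_le_div_of_nonneg_left hδ0.le two_pos hβ
  set G := {ω | (m : ℝ) / 2 ≤ (#{i | t ≤ ρ i ω} : ℝ)}
  have hGc : Gᶜ ⊆ {ω | m / 2 + 1 ≤ #{i | ρ i ω ∈ Set.Iio t}} := fun ω hω => by
    have hlt : (#{i | t ≤ ρ i ω} : ℝ) < m / 2 := not_le.mp hω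
    simpa [Set.mem_Iio, not_le] using
      half_succ_le_card_filter_not (fun i => t ≤ ρ i ω) (by simpa using hlt)
  have hbelow : ∀ i, ℙ (ρ i ⁻¹' Set.Iio t) ≤ ENNReal.ofReal t := fun i =>
    (measure_mono fun ω (h : ρ i ω < t) => h.le).trans (hsubunif i t ⟨ht0.le, by linarith⟩)
  have hunion : ((Fintype.card (Fin m)).choose (m / 2 + 1) : ENNReal) *
      ENNReal.ofReal t ^ (m / 2 + 1) ≤ ENNReal.ofReal δ := by
    rw [Fintype.card_fin, ← ENNReal.ofReal_pow ht0.le, ← ENNReal.ofReal_natCast,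
      ← ENNReal.ofReal_mul (by positivity)]
    exact ENNReal.ofReal_le_ofReal
      ((choose_mul_pow_half_succ_le ht0.le (by linarith) m).trans (by linarith))
  have hbad : ℙ Gᶜ ≤ ENNReal.ofReal δ := (measure_mono hGc).trans <|
    (measure_le_card_filter_mem_le_choose_mul_pow hindep measurableSet_Iio hbelow _).trans hunion
  calc 1 - ENNReal.ofReal δ ≤ ℙ Set.univ - ℙ Gᶜ := by rw [measure_univ]; gcongr
    _ ≤ ℙ (Set.univ \ Gᶜ) := le_measure_sdiff
    _ = ℙ G := by rw [Set.sdiff_compl, Set.univ_inter]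

/-- With probability at least `1 - δ`, at least half of `m` independent sub-uniform
random variables exceed `δ / β`, where `β = (5 / (3(1 - 4δ))) log(1/δ)`. -/
theorem half_subuniform_above_threshold {Ω : Type*} [MeasureSpace Ω]
    [IsProbabilityMeasure (ℙ : Measure Ω)]
    {δ : ℝ} (hδ0 : 0 < δ) (hδ1 : δ < 1 / 4)
    {m : ℕ} (ρ : Fin m → Ω → ℝ) (hmeas : ∀ i, Measurable (ρ i))
    (hrange : ∀ i ω, ρ i ω ∈ Set.Ioc (0 : ℝ) 1)
    (hsubunif : ∀ i, ∀ x ∈ Set.Icc (0 : ℝ) 1, ℙ {ω | ρ i ω ≤ x} ≤ ENNReal.ofReal x)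
    (hindep : iIndepFun ρ ℙ) :
    1 - ENNReal.ofReal δ ≤
      ℙ {ω | (m : ℝ) / 2 ≤
        ((Finset.univ.filter
          (fun i => δ / (5 / (3 * (1 - 4 * δ)) * Real.log (1 / δ)) ≤ ρ i ω)).card : ℝ)} :=
  half_subuniform_above_threshold_general hδ0 hδ1 ρ hsubunif hindep
end

section
/- Let u_{(ℓ)} denote the ℓ-th order statistic of m i.i.d. Uniform[0,1] random variables, for an integer ℓ ∈ {1,…,m}. Then for every x ∈ [0, ℓ/m): P( u_{(ℓ)} ≤ x ) ≤ exp( −(ℓ/2)·(1 − m·x/ℓ)² ). In particular, taking x = ℓ/(2m) gives P( u_{(ℓ)} ≤ ℓ/(2m) ) ≤ e^{−ℓ/8}. -/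
open MeasureTheory ProbabilityTheory Finset

/-!
`orderStat u ℓ ω ≤ x` says that at least `ℓ` of the events `{u i ≤ x}` occur. These events are
independent with probability at most `x`, so the Chernoff bound gives
`P ≤ exp (-t ℓ + m x (eᵗ - 1))` for every `t ≥ 0`. At `t = -log (1 - s)`, `s = 1 - m x / ℓ`,
the exponent is `-ℓ (-log (1 - s) - s)`, and `-log (1 - s) ≥ s + s² / 2`.
-/

/-- The ℓ-th order statistic (the ℓ-th smallest value) of the family `u`, defined as the
infimum of levels below which at least `ℓ` of the values lie. -/
noncomputable def orderStat {Ω : Type*} {m : ℕ} (u : Fin m → Ω → ℝ) (ℓ : ℕ) (ω : Ω) : ℝ :=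
  sInf {x : ℝ | ℓ ≤ (Finset.univ.filter (fun i => u i ω ≤ x)).card}

theorem exists_forall_le_card_filter_le_iff {ι α : Type*} [Fintype ι] [LinearOrder α]
    (v : ι → α) {ℓ : ℕ} (hℓ1 : 1 ≤ ℓ) (hℓ : ℓ ≤ Fintype.card ι) :
    ∃ a, ∀ y, ℓ ≤ #{i | v i ≤ y} ↔ a ≤ y := by
  classical
  have hne : (univ : Finset ι).Nonempty := univ_nonempty_iff.2 (Fintype.card_pos_iff.1 (by omega))
  set T := (univ.image v).filter (fun t => ℓ ≤ #{i | v i ≤ t})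
  have hT : T.Nonempty := by
    refine ⟨univ.sup' hne v, mem_filter.2 ⟨?_, ?_⟩⟩
    · obtain ⟨j, -, hj⟩ := exists_mem_eq_sup' hne v
      exact mem_image.2 ⟨j, mem_univ _, hj.symm⟩
    · rwa [filter_true_of_mem fun i _ => le_sup' v (mem_univ i), card_univ]
  refine ⟨T.min' hT, fun y => ⟨fun hy => ?_, fun hy => ?_⟩⟩
  · -- the largest value below `y` has the same count as `y`
    have hS : ({i | v i ≤ y} : Finset ι).Nonempty := card_pos.1 (by omega)
    set b := ({i | v i ≤ y} : Finset ι).sup' hS v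
    have hb : b ≤ y := sup'_le _ _ fun i hi => (mem_filter.1 hi).2
    have hcount : #{i | v i ≤ b} = #{i | v i ≤ y} := congrArg card <| filter_congr fun i _ =>
      ⟨fun h => h.trans hb, fun h => le_sup' v (mem_filter.2 ⟨mem_univ i, h⟩)⟩
    obtain ⟨j, -, hj⟩ := exists_mem_eq_sup' hS v
    exact (T.min'_le b (mem_filter.2 ⟨mem_image.2 ⟨j, mem_univ j, hj.symm⟩, hcount ▸ hy⟩)).trans hb
  · exact (mem_filter.1 (T.min'_mem hT)).2.trans
      (card_le_card fun i hi => mem_filter.2 ⟨mem_univ i, (mem_filter.1 hi).2.trans hy⟩)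

theorem orderStat_le_iff {Ω : Type*} {m : ℕ} (u : Fin m → Ω → ℝ) {ℓ : ℕ} (hℓ1 : 1 ≤ ℓ)
    (hℓm : ℓ ≤ m) (ω : Ω) (x : ℝ) :
    orderStat u ℓ ω ≤ x ↔ ℓ ≤ #{i | u i ω ≤ x} := by
  obtain ⟨a, ha⟩ := exists_forall_le_card_filter_le_iff (u · ω) hℓ1 (by simpa using hℓm)
  have hset : {y : ℝ | ℓ ≤ #{i | u i ω ≤ y}} = Set.Ici a := Set.ext ha
  rw [orderStat, hset, csInf_Ici, ha]

theorem Real.add_sq_div_two_le_neg_log_one_sub {s : ℝ} (hs0 : 0 ≤ s) (hs1 : s < 1) :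
    s + s ^ 2 / 2 ≤ -Real.log (1 - s) := by
  have h := sum_le_hasSum (range 2) (fun n _ => by positivity)
    (Real.hasSum_pow_div_log_of_abs_lt_one (abs_lt.2 ⟨by linarith, hs1⟩))
  norm_num [sum_range_succ] at h
  linarith

theorem exists_nonneg_neg_mul_add_mul_exp_sub_one_le {a ℓ : ℝ} (ha : 0 ≤ a) (haℓ : a < ℓ) :
    ∃ t, 0 ≤ t ∧ -t * ℓ + a * (Real.exp t - 1) ≤ -(ℓ / 2) * (1 - a / ℓ) ^ 2 := by
  rcases ha.eq_or_lt with rfl | ha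
  · exact ⟨1 / 2, by norm_num, by simp; linarith⟩
  have hℓ : 0 < ℓ := ha.trans haℓ
  set s := 1 - a / ℓ
  have hs0 : 0 ≤ s := by rw [sub_nonneg, div_le_one hℓ]; exact haℓ.le
  have hs1 : s < 1 := by simp only [s]; linarith [div_pos ha hℓ]
  -- `t = log (ℓ / a)` minimises the exponent
  have ht : Real.log (ℓ / a) = -Real.log (1 - s) := by
    rw [← Real.log_inv, sub_sub_cancel, inv_div]
  have hts := Real.add_sq_div_two_le_neg_log_one_sub hs0 hs1
  refine ⟨Real.log (ℓ / a), ht ▸ hs0.trans (by nlinarith), ?_⟩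
  have hlin : a * (Real.exp (Real.log (ℓ / a)) - 1) = ℓ * s := by
    rw [Real.exp_log (div_pos hℓ ha)]; simp only [s]; field_simp
  rw [hlin, ht]
  nlinarith

theorem ProbabilityTheory.iIndepFun.iIndepSet_preimage {Ω ι : Type*} {_ : MeasurableSpace Ω}
    {μ : Measure Ω} {β : ι → Type*} [∀ i, MeasurableSpace (β i)] {f : ∀ i, Ω → β i}
    (hf : iIndepFun f μ) {s : ∀ i, Set (β i)} (hs : ∀ i, MeasurableSet (s i)) :
    iIndepSet (fun i => f i ⁻¹' s i) μ := by
  rw [iIndepSet_iff_iIndep]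
  exact iIndep_of_iIndep_of_le ((iIndepFun_iff_iIndep _ _ _).1 hf) fun i =>
    MeasurableSpace.generateFrom_le fun t ht => by
      rw [Set.mem_singleton_iff.1 ht]
      exact ⟨s i, hs i, rfl⟩

section Chernoff

variable {Ω : Type*} {_ : MeasurableSpace Ω} {μ : Measure Ω}

theorem mgf_indicator_one [IsProbabilityMeasure μ] {E : Set Ω} (hE : MeasurableSet E) (t : ℝ) :
    mgf (E.indicator fun _ => (1 : ℝ)) μ t = 1 + (Real.exp t - 1) * μ.real E := by
  have h : (fun ω => Real.exp (t * E.indicator (fun _ => 1) ω)) =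
      fun ω => 1 + E.indicator (fun _ => Real.exp t - 1) ω := by
    ext ω
    by_cases hω : ω ∈ E <;> simp [hω]
  rw [mgf, h, integral_add (integrable_const 1) ((integrable_const _).indicator hE),
    integral_const, integral_indicator_const _ hE]
  simp [mul_comm]

theorem ProbabilityTheory.iIndepSet.measureReal_le_sum_indicator_le_exp {ι : Type*} [Fintype ι]
    {E : ι → Set Ω} (hind : iIndepSet E μ) (hE : ∀ i, MeasurableSet (E i)) {p : ℝ}
    (hp : ∀ i, μ.real (E i) ≤ p) (c : ℝ) {t : ℝ} (ht : 0 ≤ t) :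
    μ.real {ω | c ≤ ∑ i, (E i).indicator (fun _ => (1 : ℝ)) ω} ≤
      Real.exp (-t * c + Fintype.card ι * p * (Real.exp t - 1)) := by
  have := hind.isProbabilityMeasure
  set X := fun i => (E i).indicator fun _ : Ω => (1 : ℝ)
  have hXm : ∀ i, Measurable (X i) := fun i => measurable_const.indicator (hE i)
  have hX1 : ∀ i ω, X i ω ≤ 1 := fun i ω => Set.indicator_le_self' (fun _ _ => zero_le_one) ω
  have hint : Integrable (fun ω => Real.exp (t * (∑ i, X i) ω)) μ :=
    integrable_exp_mul_of_le t (Fintype.card ι) ht (by fun_prop) <| ae_of_all _ fun ω => by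
      simpa [Finset.sum_apply] using sum_le_sum fun i (_ : i ∈ univ) => hX1 i ω
  have hfactor : ∀ i, 1 + (Real.exp t - 1) * μ.real (E i) ≤ Real.exp ((Real.exp t - 1) * p) :=
    fun i => by
      have : 0 ≤ Real.exp t - 1 := by linarith [Real.one_le_exp ht]
      linarith [mul_le_mul_of_nonneg_left (hp i) this, Real.add_one_le_exp ((Real.exp t - 1) * p)]
  calc μ.real {ω | c ≤ ∑ i, X i ω} = μ.real {ω | c ≤ (∑ i, X i) ω} := by
        simp only [Finset.sum_apply]
  _ ≤ Real.exp (-t * c) * mgf (∑ i, X i) μ t := measure_ge_le_exp_mul_mgf c ht hint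
  _ = Real.exp (-t * c) * ∏ i, (1 + (Real.exp t - 1) * μ.real (E i)) := by
    rw [hind.iIndepFun_indicator.mgf_sum hXm]
    simp only [mgf_indicator_one (hE _)]
  _ ≤ Real.exp (-t * c) * ∏ _i : ι, Real.exp ((Real.exp t - 1) * p) := by
    refine mul_le_mul_of_nonneg_left (prod_le_prod (fun i _ => ?_) fun i _ => hfactor i)
      (Real.exp_pos _).le
    exact mgf_indicator_one (μ := μ) (hE i) t ▸ mgf_nonneg
  _ = _ := by rw [prod_const, card_univ, ← Real.exp_nat_mul, ← Real.exp_add]; ring_nf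

end Chernoff

theorem measureReal_preimage_Iic_le_of_map_eq_uniform {Ω : Type*} {_ : MeasurableSpace Ω}
    {μ : Measure Ω} {f : Ω → ℝ} (hf : Measurable f)
    (hunif : μ.map f = volume.restrict (Set.Icc 0 1)) {x : ℝ} (hx : 0 ≤ x) :
    μ.real (f ⁻¹' Set.Iic x) ≤ x :=
  calc μ.real (f ⁻¹' Set.Iic x) = volume.real (Set.Iic x ∩ Set.Icc 0 1) := by
        rw [← map_measureReal_apply hf measurableSet_Iic, hunif,
          measureReal_restrict_apply measurableSet_Iic]
  _ ≤ volume.real (Set.Icc 0 x) :=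
    measureReal_mono (fun y hy => ⟨hy.2.1, hy.1⟩) measure_Icc_lt_top.ne
  _ = x := by rw [Real.volume_real_Icc_of_le hx, sub_zero]

/-- Chernoff lower-tail bound for uniform order statistics. -/
theorem uniform_orderStat_lower_tail {Ω : Type*} [MeasureSpace Ω]
    [IsProbabilityMeasure (ℙ : Measure Ω)]
    {m : ℕ} (u : Fin m → Ω → ℝ) (humeas : ∀ i, Measurable (u i))
    (huunif : ∀ i, Measure.map (u i) ℙ = volume.restrict (Set.Icc (0 : ℝ) 1))
    (huindep : iIndepFun u ℙ)
    {ℓ : ℕ} (hℓ1 : 1 ≤ ℓ) (hℓm : ℓ ≤ m) :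
    (∀ x : ℝ, 0 ≤ x → x < (ℓ : ℝ) / m →
      ℙ {ω | orderStat u ℓ ω ≤ x} ≤
        ENNReal.ofReal (Real.exp (-((ℓ : ℝ) / 2) * (1 - (m : ℝ) * x / ℓ) ^ 2))) ∧
    ℙ {ω | orderStat u ℓ ω ≤ (ℓ : ℝ) / (2 * m)} ≤
      ENNReal.ofReal (Real.exp (-(ℓ : ℝ) / 8)) := by
  have hm : (0 : ℝ) < m := by exact_mod_cast hℓ1.trans hℓm
  have tail : ∀ x : ℝ, 0 ≤ x → x < (ℓ : ℝ) / m →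
      ℙ {ω | orderStat u ℓ ω ≤ x} ≤
        ENNReal.ofReal (Real.exp (-((ℓ : ℝ) / 2) * (1 - (m : ℝ) * x / ℓ) ^ 2)) := by
    intro x hx0 hxℓ
    set E := fun i => u i ⁻¹' Set.Iic x
    have hevent : {ω | orderStat u ℓ ω ≤ x} =
        {ω | (ℓ : ℝ) ≤ ∑ i, (E i).indicator (fun _ => (1 : ℝ)) ω} := by
      ext ω
      classical
      simp only [Set.mem_ofPred_eq, orderStat_le_iff u hℓ1 hℓm, E, Set.indicator_apply,
        Set.mem_preimage, Set.mem_Iic, sum_boole, Nat.cast_le]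
    obtain ⟨t, ht0, ht⟩ := exists_nonneg_neg_mul_add_mul_exp_sub_one_le (a := m * x)
      (by positivity) (by rwa [lt_div_iff₀ hm, mul_comm] at hxℓ)
    rw [hevent, ← ofReal_measureReal]
    refine ENNReal.ofReal_le_ofReal (((huindep.iIndepSet_preimage fun _ => measurableSet_Iic)
      |>.measureReal_le_sum_indicator_le_exp (fun i => humeas i measurableSet_Iic)
      (fun i => measureReal_preimage_Iic_le_of_map_eq_uniform (humeas i) (huunif i) hx0)
      ℓ ht0).trans ?_)
    simpa only [Fintype.card_fin, Real.exp_le_exp] using ht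
  refine ⟨tail, ?_⟩
  have hℓ : (0 : ℝ) < ℓ := by exact_mod_cast hℓ1
  have hexponent : -((ℓ : ℝ) / 2) * (1 - (m : ℝ) * (ℓ / (2 * m)) / ℓ) ^ 2 = -(ℓ : ℝ) / 8 := by
    field_simp
    ring
  simpa only [hexponent] using
    tail (ℓ / (2 * m)) (by positivity) (div_lt_div_of_pos_left hℓ hm (by linarith))
end

section
/- Let X_1,…,X_m be i.i.d. Uniform[0,1] random variables, let A(s) = Σ_{i=1}^m 1{X_i ≤ s}, and let (F_s)_{s∈[0,1)} be the filtration with F_s generated by the random variables A(u) for u ≤ s. Then the process M(s) = (A(s) − m·s)/(1 − s), s ∈ [0,1), is a martingale with respect to (F_s): for all 0 ≤ s ≤ t < 1, E[ M(t) | F_s ] = M(s). -/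
open MeasureTheory ProbabilityTheory Finset

variable {Ω : Type*}

/-- The empirical count `A(s) = Σ_i 1{X_i ≤ s}` (as a real number). -/
noncomputable def Acount {m : ℕ} (X : Fin m → Ω → ℝ) (s : ℝ) (ω : Ω) : ℝ :=
  ((Finset.univ.filter (fun i => X i ω ≤ s)).card : ℝ)

/-- The σ-algebra generated by the random variables `A(u)` for `u ≤ s`. -/
noncomputable def countFiltration {m : ℕ} (X : Fin m → Ω → ℝ) (s : ℝ) :
    MeasurableSpace Ω :=
  ⨆ u ∈ Set.Iic s, MeasurableSpace.comap (Acount X u) inferInstance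

/-- The process `M(s) = (A(s) - m s)/(1 - s)`. -/
noncomputable def bridgeM {m : ℕ} (X : Fin m → Ω → ℝ) (s : ℝ) (ω : Ω) : ℝ :=
  (Acount X s ω - (m : ℝ) * s) / (1 - s)

/-!
Observation `i` contributes `bridgeTerm u (X i) = (1{X i ≤ u} - u) / (1 - u)` to `M(u)`, so
`M(t) - M(s) = ∑ i, g (X i)` with `g = bridgeTerm t - bridgeTerm s`; this `g` vanishes on `x ≤ s`
and has mean zero under the uniform law. We condition on the larger σ-algebra of the observations
censored at `s` (kept when `≤ s`, replaced by `s + 1` otherwise). On a box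
`{∀ j, censor s (X j) ∈ B j}` the factor `g (X i)` is nonzero only where the censored value of
`X i` is the constant `s + 1`, so independence factors the integral into a product containing
`E[g (X i)] = 0`.
A π-system argument extends this to every censored event, in particular to every event of `F_s`,
and `M(s)` is `F_s`-measurable.
-/

namespace MeasureTheory

variable {E : Type*} [NormedAddCommGroup E] [NormedSpace ℝ E]
  {m m₀ : MeasurableSpace Ω} {μ : Measure Ω} {f : Ω → E} {p : Set (Set Ω)}

theorem setIntegral_eq_zero_of_isPiSystem (hm : m ≤ m₀) (h_eq : m = MeasurableSpace.generateFrom p)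
    (hp : IsPiSystem p) (hf : Integrable f μ) (h_univ : ∫ x, f x ∂μ = 0)
    (h_basic : ∀ t ∈ p, ∫ x in t, f x ∂μ = 0) {t : Set Ω} (ht : MeasurableSet[m] t) :
    ∫ x in t, f x ∂μ = 0 := by
  induction t, ht using MeasurableSpace.induction_on_inter h_eq hp with
  | empty => simp
  | basic t ht => exact h_basic t ht
  | compl t ht iht =>
    rw [setIntegral_compl (hm t ht) hf, h_univ, iht, sub_zero]
  | iUnion g hgd hgm ihg =>
    rw [integral_iUnion (fun n => hm _ (hgm n)) hgd hf.integrableOn]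
    simp [ihg]

end MeasureTheory

section Censoring

variable {ι : Type*}

noncomputable def censor (s x : ℝ) : ℝ := if x ≤ s then x else s + 1

theorem measurable_censor (s : ℝ) : Measurable (censor s) :=
  Measurable.ite measurableSet_Iic measurable_id measurable_const

theorem censor_le_iff {s u x : ℝ} (hu : u ≤ s) : censor s x ≤ u ↔ x ≤ u := by
  unfold censor
  split_ifs with hx
  · rfl
  · constructor <;> intro h <;> linarith

theorem indicator_censor_mul {s : ℝ} {g : ℝ → ℝ} (hg : ∀ x ≤ s, g x = 0) (B : Set ℝ) (x : ℝ) :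
    B.indicator 1 (censor s x) * g x = B.indicator 1 (s + 1) * g x := by
  by_cases hx : x ≤ s
  · simp [hg x hx]
  · simp [censor, hx]

noncomputable def censoredVec (X : ι → Ω → ℝ) (s : ℝ) (ω : Ω) : ι → ℝ :=
  fun j => censor s (X j ω)

noncomputable def censoredAlg (X : ι → Ω → ℝ) (s : ℝ) : MeasurableSpace Ω :=
  MeasurableSpace.comap (censoredVec X s) MeasurableSpace.pi

theorem censoredAlg_le [MeasurableSpace Ω] {X : ι → Ω → ℝ} (hX : ∀ i, Measurable (X i)) (s : ℝ) :
    censoredAlg X s ≤ ‹MeasurableSpace Ω› :=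
  (measurable_pi_lambda _ fun j => (measurable_censor s).comp (hX j)).comap_le

theorem measurable_censoredAlg_censor (X : ι → Ω → ℝ) (s : ℝ) (j : ι) :
    Measurable[censoredAlg X s] fun ω => censor s (X j ω) :=
  (measurable_pi_apply j).comp (comap_measurable (censoredVec X s))

def censoredBoxes (X : ι → Ω → ℝ) (s : ℝ) : Set (Set Ω) :=
  {C | ∃ B : ι → Set ℝ, (∀ j, MeasurableSet (B j)) ∧ C = {ω | ∀ j, censor s (X j ω) ∈ B j}}

theorem censoredAlg_eq_generateFrom [Finite ι] (X : ι → Ω → ℝ) (s : ℝ) :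
    censoredAlg X s = MeasurableSpace.generateFrom (censoredBoxes X s) := by
  rw [censoredAlg, ← generateFrom_pi, MeasurableSpace.comap_generateFrom]
  congr 1
  ext C
  simp [censoredBoxes, censoredVec, Set.preimage, eq_comm]

theorem isPiSystem_censoredBoxes (X : ι → Ω → ℝ) (s : ℝ) : IsPiSystem (censoredBoxes X s) := by
  rintro _ ⟨B, hB, rfl⟩ _ ⟨B', hB', rfl⟩ -
  exact ⟨fun j => B j ∩ B' j, fun j => (hB j).inter (hB' j), by ext; simp [forall_and]⟩

end Censoring

section Independence

variable {ι : Type*} [Fintype ι] [DecidableEq ι] [MeasurableSpace Ω] {μ : Measure Ω}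
  {X : ι → Ω → ℝ}

theorem setIntegral_censoredBox_eq_zero (hX : ∀ i, Measurable (X i)) (hind : iIndepFun X μ)
    {s : ℝ} {g : ℝ → ℝ} (hg : Measurable g) (hg0 : ∀ x ≤ s, g x = 0) {i : ι}
    (hmean : ∫ ω, g (X i ω) ∂μ = 0) {C : Set Ω} (hC : C ∈ censoredBoxes X s) :
    ∫ ω in C, g (X i ω) ∂μ = 0 := by
  have hCm : MeasurableSet C := censoredAlg_le hX s C
    (censoredAlg_eq_generateFrom X s ▸ MeasurableSpace.measurableSet_generateFrom hC)
  obtain ⟨B, hB, rfl⟩ := hC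
  set ψ : ι → ℝ → ℝ := fun j x => (B j).indicator 1 (censor s x) * if j = i then g x else 1
  have hψ : ∀ j, Measurable (ψ j) := fun j =>
    ((measurable_one.indicator (hB j)).comp (measurable_censor s)).mul
      (by split_ifs; exacts [hg, measurable_const])
  have h_prod : ∀ ω, {ω | ∀ j, censor s (X j ω) ∈ B j}.indicator (fun ω => g (X i ω)) ω
      = ∏ j, ψ j (X j ω) := by
    intro ω
    simp only [ψ]
    rw [Finset.prod_mul_distrib, Finset.prod_ite_eq', if_pos (Finset.mem_univ i)]
    by_cases hω : ω ∈ {ω | ∀ j, censor s (X j ω) ∈ B j}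
    · rw [Set.indicator_of_mem hω,
        Finset.prod_eq_one fun j _ => Set.indicator_of_mem (hω j) 1, one_mul]
    · obtain ⟨j, hj⟩ := not_forall.mp hω
      rw [Set.indicator_of_notMem hω,
        Finset.prod_eq_zero (Finset.mem_univ j) (Set.indicator_of_notMem hj 1), zero_mul]
  have h_factor : ∫ ω, ψ i (X i ω) ∂μ = 0 := by
    simp only [ψ, if_pos, indicator_censor_mul hg0, integral_const_mul, hmean, mul_zero]
  rw [← integral_indicator hCm, integral_congr_ae (ae_of_all _ h_prod),
    hind.integral_fun_prod_comp (fun j => (hX j).aemeasurable)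
      (fun j => (hψ j).aestronglyMeasurable)]
  exact Finset.prod_eq_zero (Finset.mem_univ i) h_factor

end Independence

section Bridge

variable {m : ℕ}

theorem Acount_eq_sum (X : Fin m → Ω → ℝ) (u : ℝ) (ω : Ω) :
    Acount X u ω = ∑ i, (Set.Iic u).indicator 1 (X i ω) := by
  classical
  rw [Acount, Finset.card_filter]
  push_cast
  simp only [Set.indicator_apply, Set.mem_Iic, Pi.one_apply]

theorem measurable_Acount {mΩ : MeasurableSpace Ω} {X : Fin m → Ω → ℝ} (hX : ∀ i, Measurable (X i))
    (u : ℝ) : Measurable (Acount X u) := by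
  simp_rw [funext (Acount_eq_sum X u)]
  exact Finset.measurable_sum _ fun i _ => (measurable_one.indicator measurableSet_Iic).comp (hX i)

theorem Acount_censor (X : Fin m → Ω → ℝ) {s u : ℝ} (hu : u ≤ s) :
    Acount (fun i ω => censor s (X i ω)) u = Acount X u := by
  ext ω
  simp only [Acount, censor_le_iff hu]

theorem countFiltration_le_censoredAlg (X : Fin m → Ω → ℝ) (s : ℝ) :
    countFiltration X s ≤ censoredAlg X s :=
  iSup₂_le fun u hu => Acount_censor X hu ▸
    (measurable_Acount (measurable_censoredAlg_censor X s) u).comap_le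

theorem measurable_Acount_countFiltration (X : Fin m → Ω → ℝ) (s : ℝ) :
    Measurable[countFiltration X s] (Acount X s) :=
  Measurable.of_comap_le <| le_iSup₂ (f := fun u (_ : u ∈ Set.Iic s) =>
    MeasurableSpace.comap (Acount X u) inferInstance) s Set.self_mem_Iic

theorem measurable_bridgeM_countFiltration (X : Fin m → Ω → ℝ) (s : ℝ) :
    Measurable[countFiltration X s] (bridgeM X s) :=
  ((measurable_Acount_countFiltration X s).sub_const _).div_const _

noncomputable def bridgeTerm (u x : ℝ) : ℝ := ((Set.Iic u).indicator 1 x - u) / (1 - u)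

theorem bridgeM_eq_sum (X : Fin m → Ω → ℝ) (u : ℝ) (ω : Ω) :
    bridgeM X u ω = ∑ i, bridgeTerm u (X i ω) := by
  simp [bridgeM, bridgeTerm, Acount_eq_sum, ← Finset.sum_div]

theorem bridgeTerm_of_le {u x : ℝ} (hx : x ≤ u) (hu : u ≠ 1) : bridgeTerm u x = 1 := by
  rw [bridgeTerm, Set.indicator_of_mem (Set.mem_Iic.mpr hx), Pi.one_apply,
    div_self (sub_ne_zero.mpr hu.symm)]

theorem measurable_bridgeTerm (u : ℝ) : Measurable (bridgeTerm u) :=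
  ((measurable_one.indicator measurableSet_Iic).sub_const _).div_const _

theorem integrable_bridgeTerm_comp [MeasurableSpace Ω] {μ : Measure Ω} [IsFiniteMeasure μ]
    {Y : Ω → ℝ} (hY : Measurable Y) (u : ℝ) : Integrable (fun ω => bridgeTerm u (Y ω)) μ :=
  (((integrable_const 1).indicator (hY measurableSet_Iic)).sub (integrable_const u)).div_const _

theorem integral_bridgeTerm_uniform {u : ℝ} (h0 : 0 ≤ u) (h1 : u ≤ 1) :
    ∫ x, bridgeTerm u x ∂(volume.restrict (Set.Icc 0 1)) = 0 := by
  have hint :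
      Integrable ((Set.Iic u).indicator (1 : ℝ → ℝ)) (volume.restrict (Set.Icc (0 : ℝ) 1)) :=
    (integrable_const 1).indicator measurableSet_Iic
  have hcdf : (volume.restrict (Set.Icc (0 : ℝ) 1)).real (Set.Iic u) = u := by
    have hIcc : Set.Iic u ∩ Set.Icc 0 1 = Set.Icc 0 u := by
      ext x
      simp only [Set.mem_inter_iff, Set.mem_Iic, Set.mem_Icc]
      grind
    rw [measureReal_restrict_apply measurableSet_Iic, hIcc, Real.volume_real_Icc_of_le h0,
      sub_zero]
  have htot : (volume.restrict (Set.Icc (0 : ℝ) 1)).real Set.univ = 1 := by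
    simp
  simp only [bridgeTerm]
  rw [integral_div, integral_sub hint (integrable_const u), integral_indicator_one measurableSet_Iic,
    integral_const, hcdf, htot, one_smul, sub_self, zero_div]

theorem integral_bridgeTerm_comp_eq_zero [MeasurableSpace Ω] {μ : Measure Ω} {Y : Ω → ℝ}
    (hY : Measurable Y) (hunif : Measure.map Y μ = volume.restrict (Set.Icc (0 : ℝ) 1)) {u : ℝ}
    (h0 : 0 ≤ u) (h1 : u ≤ 1) : ∫ ω, bridgeTerm u (Y ω) ∂μ = 0 := by
  rw [← integral_map hY.aemeasurable (measurable_bridgeTerm u).aestronglyMeasurable, hunif]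
  exact integral_bridgeTerm_uniform h0 h1

theorem integrable_bridgeM [MeasurableSpace Ω] {μ : Measure Ω} [IsFiniteMeasure μ]
    {X : Fin m → Ω → ℝ} (hX : ∀ i, Measurable (X i)) (u : ℝ) : Integrable (bridgeM X u) μ := by
  simp_rw [funext (bridgeM_eq_sum X u)]
  exact integrable_finsetSum _ fun i _ => integrable_bridgeTerm_comp (hX i) u

end Bridge

theorem setIntegral_bridgeM_eq [MeasurableSpace Ω] {μ : Measure Ω} [IsFiniteMeasure μ] {m : ℕ}
    {X : Fin m → Ω → ℝ} (hX : ∀ i, Measurable (X i))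
    (hunif : ∀ i, Measure.map (X i) μ = volume.restrict (Set.Icc (0 : ℝ) 1))
    (hindep : iIndepFun X μ) {s t : ℝ} (hs : 0 ≤ s) (hst : s ≤ t) (ht : t < 1)
    {C : Set Ω} (hC : MeasurableSet[censoredAlg X s] C) :
    ∫ ω in C, bridgeM X t ω ∂μ = ∫ ω in C, bridgeM X s ω ∂μ := by
  set g : ℝ → ℝ := fun x => bridgeTerm t x - bridgeTerm s x
  have hg : Measurable g := (measurable_bridgeTerm t).sub (measurable_bridgeTerm s)
  have hg0 : ∀ x ≤ s, g x = 0 := fun x hx => by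
    simp only [g, bridgeTerm_of_le (hx.trans hst) ht.ne, bridgeTerm_of_le hx (hst.trans_lt ht).ne,
      sub_self]
  have hgX : ∀ i, Integrable (fun ω => g (X i ω)) μ := fun i =>
    (integrable_bridgeTerm_comp (hX i) t).sub (integrable_bridgeTerm_comp (hX i) s)
  have hmean : ∀ i, ∫ ω, g (X i ω) ∂μ = 0 := fun i => by
    rw [integral_sub (integrable_bridgeTerm_comp (hX i) t) (integrable_bridgeTerm_comp (hX i) s),
      integral_bridgeTerm_comp_eq_zero (hX i) (hunif i) (hs.trans hst) ht.le,
      integral_bridgeTerm_comp_eq_zero (hX i) (hunif i) hs (hst.trans ht.le), sub_zero]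
  have hdiff : (fun ω => bridgeM X t ω - bridgeM X s ω) = fun ω => ∑ i, g (X i ω) := by
    ext ω
    simp only [bridgeM_eq_sum, g, Finset.sum_sub_distrib]
  rw [← sub_eq_zero, ← integral_sub (integrable_bridgeM hX t).integrableOn
    (integrable_bridgeM hX s).integrableOn, hdiff]
  refine setIntegral_eq_zero_of_isPiSystem (censoredAlg_le hX s) (censoredAlg_eq_generateFrom X s)
    (isPiSystem_censoredBoxes X s) (integrable_finsetSum _ fun i _ => hgX i) ?_ (fun B hB => ?_) hC
  · rw [integral_finsetSum _ fun i _ => hgX i]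
    exact Finset.sum_eq_zero fun i _ => hmean i
  · rw [integral_finsetSum _ fun i _ => (hgX i).integrableOn]
    exact Finset.sum_eq_zero fun i _ =>
      setIntegral_censoredBox_eq_zero hX hindep hg hg0 (hmean i) hB

/-- `M(s) = (A(s) - m s)/(1 - s)` is a martingale on `[0, 1)` with respect to the
filtration generated by the counts: for `0 ≤ s ≤ t < 1`, `E[M(t) | F_s] = M(s)` a.s. -/
theorem bridge_martingale [MeasureSpace Ω] [IsProbabilityMeasure (ℙ : Measure Ω)]
    {m : ℕ} (X : Fin m → Ω → ℝ) (hmeas : ∀ i, Measurable (X i))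
    (hunif : ∀ i, Measure.map (X i) ℙ = volume.restrict (Set.Icc (0 : ℝ) 1))
    (hindep : iIndepFun X ℙ) :
    ∀ s t : ℝ, 0 ≤ s → s ≤ t → t < 1 →
      (ℙ : Measure Ω)[bridgeM X t | countFiltration X s] =ᵐ[ℙ] bridgeM X s := by
  intro s t hs hst ht
  have hF_le_H := countFiltration_le_censoredAlg X s
  refine (ae_eq_condExp_of_forall_setIntegral_eq (hF_le_H.trans (censoredAlg_le hmeas s))
    (integrable_bridgeM hmeas t) (fun _ _ _ => (integrable_bridgeM hmeas s).integrableOn)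
    (fun C hC _ => ?_) (measurable_bridgeM_countFiltration X s).aestronglyMeasurable).symm
  exact (setIntegral_bridgeM_eq hmeas hunif hindep hs hst ht (hF_le_H C hC)).symm
end

section
/- For all real numbers p, q with 0 < q ≤ p < 1, the Kullback–Leibler divergence between Bernoulli(p) and Bernoulli(q), KL(p, q) = p·log(p/q) + (1−p)·log((1−p)/(1−q)), satisfies KL(p, q) ≥ (p − q)²/(2p). -/
/-!
Bound the two terms of `KL(p, q)` separately. Gibbs' pointwise inequality `log x ≥ 1 - 1/x`
gives `(1 - p) log ((1 - p)/(1 - q)) ≥ q - p`. Writing `q/p = 1 - u`, the first term is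
`p · (-log (1 - u)) = p (u + u²/2 + u³/3 + ⋯)`, and keeping the first two terms of the series
gives `p log (p/q) ≥ (p - q) + (p - q)²/(2p)`. Adding the two bounds yields the claim.
-/

open Real Finset

lemma Real.add_sq_div_two_le_neg_log_one_sub_s17 {u : ℝ} (hu₀ : 0 ≤ u) (hu₁ : u < 1) :
    u + u ^ 2 / 2 ≤ -log (1 - u) := by
  have hseries := hasSum_pow_div_log_of_abs_lt_one (abs_lt.mpr ⟨by linarith, hu₁⟩)
  have hterms := sum_le_hasSum (range 2) (fun n _ => by positivity) hseries
  norm_num [sum_range_succ] at hterms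
  linarith

lemma Real.sub_le_mul_log_div {a b : ℝ} (ha : 0 < a) (hb : 0 < b) : a - b ≤ a * log (a / b) := by
  have := mul_le_mul_of_nonneg_left (one_sub_inv_le_log_of_pos (div_pos ha hb)) ha.le
  rwa [inv_div, mul_sub, mul_one, mul_div_cancel₀ _ ha.ne'] at this

lemma Real.sub_add_sq_div_le_mul_log_div {a b : ℝ} (hb : 0 < b) (hba : b ≤ a) :
    (a - b) + (a - b) ^ 2 / (2 * a) ≤ a * log (a / b) := by
  have ha : 0 < a := hb.trans_le hba
  have hu : 1 - (a - b) / a = b / a := by field_simp; ring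
  have hlog := add_sq_div_two_le_neg_log_one_sub_s17 (u := (a - b) / a) (by positivity)
    (by rw [div_lt_one ha]; linarith)
  rw [hu, ← log_inv, inv_div] at hlog
  calc (a - b) + (a - b) ^ 2 / (2 * a) = a * ((a - b) / a + ((a - b) / a) ^ 2 / 2) := by
        field_simp
    _ ≤ a * log (a / b) := mul_le_mul_of_nonneg_left hlog ha.le

/-- The Kullback–Leibler divergence between `Bernoulli(p)` and `Bernoulli(q)` satisfies
`KL(p, q) ≥ (p - q)² / (2p)` for `0 < q ≤ p < 1`. -/
theorem bernoulli_kl_lower_bound (p q : ℝ) (hq : 0 < q) (hqp : q ≤ p) (hp : p < 1) :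
    (p - q) ^ 2 / (2 * p) ≤
      p * Real.log (p / q) + (1 - p) * Real.log ((1 - p) / (1 - q)) := by
  have hfirst := Real.sub_add_sq_div_le_mul_log_div hq hqp
  have hsecond := Real.sub_le_mul_log_div (a := 1 - p) (b := 1 - q) (by linarith) (by linarith)
  linarith
end
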